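/- arXiv:2101.03067 — 4 statements merged into one kernel-verified Lean document; each statement's English description precedes it below -/
import Mathlib

section
/- If X ∈ ℝ^{m×n} has graph-induced bandwidth at most B_X with respect to (G, I, J) and W ∈ ℝ^{n×k} has bandwidth at most B_W with respect to (G, J, K), then the product XW has bandwidth at most B_X + B_W with respect to (G, I, K). -/
/-- A matrix `X` has graph-induced bandwidth at most `B` with respect to `(G, r, c)`,
where `r` (resp. `c`) assigns each row (resp. column) index to a node of the graph:
the `(i,j)`-block of `X` vanishes whenever the graph distance between `i` and `j`
exceeds `B`. -/
def BandwidthLE {V m n : Type*} (G : SimpleGraph V) (r : m → V) (c : n → V)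
    (X : Matrix m n ℝ) (B : ℕ) : Prop :=
  ∀ a : m, ∀ b : n, (B : ℕ∞) < G.edist (r a) (c b) → X a b = 0

/-- If `X` has graph-induced bandwidth at most `B_X` with respect to
`(G, I, J)` and `W` has bandwidth at most `B_W` with respect to `(G, J, K)`, then the
product `X * W` has bandwidth at most `B_X + B_W` with respect to `(G, I, K)`. -/
theorem mul_bandwidth {V m n k : Type*} [Fintype n] (G : SimpleGraph V)
    (r : m → V) (c : n → V) (d : k → V)
    (X : Matrix m n ℝ) (W : Matrix n k ℝ) (BX BW : ℕ)
    (hX : BandwidthLE G r c X BX) (hW : BandwidthLE G c d W BW) :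
    BandwidthLE G r d (X * W) (BX + BW) := by
  intro a b h
  simp only [Matrix.mul_apply]
  apply Finset.sum_eq_zero
  intro j _
  by_cases h1 : (BX : ℕ∞) < G.edist (r a) (c j)
  · rw [hX a j h1, zero_mul]
  · have h2 : (BW : ℕ∞) < G.edist (c j) (d b) := by
      by_contra h2
      push_neg at h1 h2
      have := G.edist_triangle (u := r a) (v := c j) (w := d b)
      have : G.edist (r a) (d b) ≤ (BX : ℕ∞) + BW :=
        le_trans this (add_le_add h1 h2)
      rw [← Nat.cast_add] at this
      exact absurd this (not_le.mpr h)
    rw [hW j b h2, mul_zero]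
end

section
/- Let M ∈ ℝ^{m×n} with index set families I = {I_i}_{i∈V} and J = {J_j}_{j∈V} partitioning {1,…,m} and {1,…,n}. Then the largest singular value of M satisfies σ_max(M) ≤ √( (max_{i∈V} Σ_{j∈V} ‖M[I_i,J_j]‖) · (max_{j∈V} Σ_{i∈V} ‖M[I_i,J_j]‖) ), where ‖·‖ denotes the induced 2-norm of each block. -/
open Matrix BigOperators

attribute [local instance] Classical.propDecidable

/-- Euclidean (ℓ²) norm of a finitely indexed real vector. -/
noncomputable def vnorm {n : Type*} [Fintype n] (v : n → ℝ) : ℝ :=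
  Real.sqrt (∑ i, v i ^ 2)

/-- Induced 2-norm (largest singular value) of a real matrix. -/
noncomputable def opNorm {m n : Type*} [Fintype m] [Fintype n] (M : Matrix m n ℝ) : ℝ :=
  ⨆ v : n → ℝ, vnorm (M *ᵥ v) / vnorm v

/-- The `(i,j)`-block of a matrix `M` with respect to node-assignment maps `r`, `c`. -/
def blk {V m n : Type*} (r : m → V) (c : n → V) (M : Matrix m n ℝ) (i j : V) :
    Matrix {a : m // r a = i} {b : n // c b = j} ℝ :=
  fun a b => M a.1 b.1

lemma vnorm_nonneg {n : Type*} [Fintype n] (v : n → ℝ) : 0 ≤ vnorm v :=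
  Real.sqrt_nonneg _

lemma vnorm_sq {n : Type*} [Fintype n] (v : n → ℝ) : vnorm v ^ 2 = ∑ i, v i ^ 2 :=
  Real.sq_sqrt (Finset.sum_nonneg fun _ _ => sq_nonneg _)

lemma vnorm_eq_norm {n : Type*} [Fintype n] (v : n → ℝ) :
    vnorm v = ‖(WithLp.toLp 2 v : EuclideanSpace ℝ n)‖ := by
  rw [EuclideanSpace.norm_eq]
  simp [vnorm, Real.norm_eq_abs, sq_abs]

lemma vnorm_eq_zero {n : Type*} [Fintype n] {v : n → ℝ} (h : vnorm v = 0) : v = 0 := by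
  rw [vnorm_eq_norm] at h
  have h2 : (WithLp.toLp 2 v : EuclideanSpace ℝ n) = 0 := norm_eq_zero.mp h
  simpa using congrArg (WithLp.ofLp (p := 2)) h2

lemma vnorm_sum_le {n ι : Type*} [Fintype n] (s : Finset ι) (f : ι → n → ℝ) :
    vnorm (∑ j ∈ s, f j) ≤ ∑ j ∈ s, vnorm (f j) := by
  simp only [vnorm_eq_norm]
  rw [WithLp.toLp_sum]
  exact norm_sum_le (E := EuclideanSpace ℝ n) s (fun j => WithLp.toLp 2 (f j))

lemma vnorm_mulVec_le_frob {m n : Type*} [Fintype m] [Fintype n] (A : Matrix m n ℝ)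
    (x : n → ℝ) : vnorm (A *ᵥ x) ≤ Real.sqrt (∑ a, ∑ b, A a b ^ 2) * vnorm x := by
  rw [vnorm, vnorm, ← Real.sqrt_mul (Finset.sum_nonneg fun a _ =>
    Finset.sum_nonneg fun b _ => sq_nonneg (A a b))]
  apply Real.sqrt_le_sqrt
  rw [Finset.sum_mul]
  refine Finset.sum_le_sum fun a _ => ?_
  calc (A *ᵥ x) a ^ 2 = (∑ b, A a b * x b) ^ 2 := rfl
    _ ≤ (∑ b, A a b ^ 2) * ∑ b, x b ^ 2 := Finset.sum_mul_sq_le_sq_mul_sq _ _ _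

lemma opNorm_bddAbove {m n : Type*} [Fintype m] [Fintype n] (A : Matrix m n ℝ) :
    BddAbove (Set.range fun v : n → ℝ => vnorm (A *ᵥ v) / vnorm v) := by
  refine ⟨Real.sqrt (∑ a, ∑ b, A a b ^ 2), ?_⟩
  rintro _ ⟨v, rfl⟩
  rcases eq_or_lt_of_le (vnorm_nonneg v) with h | h
  · simp only [← h, div_zero]
    exact Real.sqrt_nonneg _
  · rw [div_le_iff₀ h]
    exact vnorm_mulVec_le_frob A v

lemma opNorm_nonneg {m n : Type*} [Fintype m] [Fintype n] (A : Matrix m n ℝ) :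
    0 ≤ opNorm A := by
  have h := le_ciSup (opNorm_bddAbove A) (0 : n → ℝ)
  simpa [mulVec_zero, vnorm, opNorm] using h

lemma vnorm_mulVec_le {m n : Type*} [Fintype m] [Fintype n] (A : Matrix m n ℝ)
    (x : n → ℝ) : vnorm (A *ᵥ x) ≤ opNorm A * vnorm x := by
  rcases eq_or_lt_of_le (vnorm_nonneg x) with h | h
  · have hx : x = 0 := vnorm_eq_zero h.symm
    subst hx
    simp [mulVec_zero, vnorm, mul_nonneg (opNorm_nonneg A)]
  · have := le_ciSup (opNorm_bddAbove A) x
    rw [div_le_iff₀ h] at this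
    exact this

/-- block generalization of `‖M‖₂ ≤ √(‖M‖₁‖M‖∞)`.  For a block
partition of `M` indexed by a finite node set `V`,
`σmax(M) ≤ √((max_i Σ_j ‖M_[i][j]‖)(max_j Σ_i ‖M_[i][j]‖))`. -/
theorem opNorm_le_block_row_col_bound {V m n : Type*} [Fintype V] [Nonempty V]
    [Fintype m] [Fintype n] (r : m → V) (c : n → V) (M : Matrix m n ℝ) :
    ∀ v : n → ℝ, vnorm (M *ᵥ v) ≤
      Real.sqrt ((⨆ i : V, ∑ j : V, opNorm (blk r c M i j)) *
        (⨆ j : V, ∑ i : V, opNorm (blk r c M i j))) * vnorm v := by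
  intro v
  classical
  set R : ℝ := ⨆ i : V, ∑ j : V, opNorm (blk r c M i j) with hRdef
  set C : ℝ := ⨆ j : V, ∑ i : V, opNorm (blk r c M i j) with hCdef
  set t : V → V → ℝ := fun i j => opNorm (blk r c M i j) with ht
  have ht0 : ∀ i j, 0 ≤ t i j := fun i j => opNorm_nonneg _
  have hbR : BddAbove (Set.range fun i : V => ∑ j : V, t i j) :=
    (Set.finite_range _).bddAbove
  have hbC : BddAbove (Set.range fun j : V => ∑ i : V, t i j) :=
    (Set.finite_range _).bddAbove
  have hRle : ∀ i, ∑ j, t i j ≤ R := fun i => le_ciSup hbR i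
  have hCle : ∀ j, ∑ i, t i j ≤ C := fun j => le_ciSup hbC j
  have hR0 : 0 ≤ R :=
    le_trans (Finset.sum_nonneg fun j _ => ht0 _ j) (hRle (Classical.arbitrary V))
  have hC0 : 0 ≤ C :=
    le_trans (Finset.sum_nonneg fun i _ => ht0 i _) (hCle (Classical.arbitrary V))
  -- block pieces of v
  set x : ∀ j : V, {b : n // c b = j} → ℝ := fun j b => v b.1 with hx
  set s : V → ℝ := fun j => vnorm (x j) with hs
  have hs0 : ∀ j, 0 ≤ s j := fun j => vnorm_nonneg _
  -- decomposition of the product on each row block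
  have hdecomp : ∀ i : V, (fun a : {a : m // r a = i} => (M *ᵥ v) a.1)
      = ∑ j : V, (blk r c M i j) *ᵥ (x j) := by
    intro i
    funext a
    rw [Finset.sum_apply]
    show (∑ b, M a.1 b * v b) = _
    rw [← Fintype.sum_fiberwise c (fun b => M a.1 b * v b)]
    rfl
  -- bound on each row block
  have hyle : ∀ i : V, vnorm (fun a : {a : m // r a = i} => (M *ᵥ v) a.1)
      ≤ ∑ j, t i j * s j := by
    intro i
    rw [hdecomp i]
    calc vnorm (∑ j : V, (blk r c M i j) *ᵥ (x j))
        ≤ ∑ j, vnorm ((blk r c M i j) *ᵥ (x j)) := vnorm_sum_le _ _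
      _ ≤ ∑ j, t i j * s j :=
          Finset.sum_le_sum fun j _ => vnorm_mulVec_le _ _
  -- Cauchy–Schwarz per row block
  have hCS : ∀ i : V, (∑ j, t i j * s j) ^ 2 ≤ R * ∑ j, t i j * s j ^ 2 := by
    intro i
    have h1 : (∑ j, t i j * s j) ^ 2 ≤ (∑ j, t i j) * ∑ j, t i j * s j ^ 2 := by
      have := Finset.sum_mul_sq_le_sq_mul_sq Finset.univ
        (fun j => Real.sqrt (t i j)) (fun j => Real.sqrt (t i j) * s j)
      have e1 : ∀ j : V, Real.sqrt (t i j) * (Real.sqrt (t i j) * s j) = t i j * s j := by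
        intro j; rw [← mul_assoc, Real.mul_self_sqrt (ht0 i j)]
      have e2 : ∀ j : V, Real.sqrt (t i j) ^ 2 = t i j := fun j => Real.sq_sqrt (ht0 i j)
      have e3 : ∀ j : V, (Real.sqrt (t i j) * s j) ^ 2 = t i j * s j ^ 2 := by
        intro j; rw [mul_pow, e2]
      simp only [e1, e2, e3] at this
      exact this
    refine h1.trans (mul_le_mul_of_nonneg_right (hRle i) ?_)
    exact Finset.sum_nonneg fun j _ => mul_nonneg (ht0 i j) (sq_nonneg _)
  -- sum of squares over row blocks
  have hsum_rows : ∑ a, (M *ᵥ v) a ^ 2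
      = ∑ i : V, (∑ a : {a : m // r a = i}, (M *ᵥ v) a.1 ^ 2) :=
    (Fintype.sum_fiberwise r (fun a => (M *ᵥ v) a ^ 2)).symm
  have hsum_cols : ∑ b, v b ^ 2 = ∑ j : V, s j ^ 2 := by
    rw [← Fintype.sum_fiberwise c (fun b => v b ^ 2)]
    exact Finset.sum_congr rfl fun j _ => by rw [hs, vnorm_sq]
  -- main inequality on the squares
  have key : ∑ a, (M *ᵥ v) a ^ 2 ≤ R * C * ∑ b, v b ^ 2 := by
    rw [hsum_rows, hsum_cols]
    calc ∑ i : V, (∑ a : {a : m // r a = i}, (M *ᵥ v) a.1 ^ 2)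
        ≤ ∑ i : V, (∑ j, t i j * s j) ^ 2 := by
          refine Finset.sum_le_sum fun i _ => ?_
          have h1 : ∑ a : {a : m // r a = i}, (M *ᵥ v) a.1 ^ 2
              = vnorm (fun a : {a : m // r a = i} => (M *ᵥ v) a.1) ^ 2 := (vnorm_sq _).symm
          rw [h1]
          exact pow_le_pow_left₀ (vnorm_nonneg _) (hyle i) 2
      _ ≤ ∑ i : V, R * ∑ j, t i j * s j ^ 2 := Finset.sum_le_sum fun i _ => hCS i
      _ = R * ∑ j : V, (∑ i : V, t i j) * s j ^ 2 := by
          rw [← Finset.mul_sum, Finset.sum_comm]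
          congr 1
          exact Finset.sum_congr rfl fun j _ => (Finset.sum_mul _ _ _).symm
      _ ≤ R * ∑ j : V, C * s j ^ 2 := by
          refine mul_le_mul_of_nonneg_left (Finset.sum_le_sum fun j _ => ?_) hR0
          exact mul_le_mul_of_nonneg_right (hCle j) (sq_nonneg _)
      _ = R * C * ∑ j : V, s j ^ 2 := by rw [← Finset.mul_sum, mul_assoc]
  -- conclude via square roots
  calc vnorm (M *ᵥ v) = Real.sqrt (∑ a, (M *ᵥ v) a ^ 2) := rfl
    _ ≤ Real.sqrt (R * C * ∑ b, v b ^ 2) := Real.sqrt_le_sqrt key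
    _ = Real.sqrt (R * C) * vnorm v := by
        rw [Real.sqrt_mul (mul_nonneg hR0 hC0)]
        rfl
end

section
/- Let Q ∈ ℝ^{n×n} be symmetric and block diagonal with respect to a partition {J_q}_{q=1}^{q̄} of {1,…,n} (i.e., Q[J_q, J_{q'}] = 0 for q ≠ q'), and let A ∈ ℝ^{m×n}. For each q let A⁻_q := A[𝒜⁻_q, J_q] where 𝒜⁻_q is the set of rows of A supported only on columns J_q. Suppose there exists γ > 0 such that for every q, the reduced Hessian of Q[J_q,J_q] with respect to A⁻_q satisfies Z_q^⊤ Q[J_q,J_q] Z_q ⪰ γ I for any orthonormal null-space basis Z_q of A⁻_q. Then the full reduced Hessian satisfies Z^⊤ Q Z ⪰ γ I for any orthonormal basis Z of the null space of A; i.e., block SSOSC with uniform margin γ implies global SSOSC with the same margin γ. -/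
open Matrix BigOperators

/-- block SSOSC implies global SSOSC.  Let `Q` be symmetric and
block diagonal with respect to the partition of the columns given by the fibers of
`g : n → 𝒬` (i.e. `Q a b = 0` when `g a ≠ g b`), and let `A` be a constraint
Jacobian.  For a block `q`, `𝒜⁻_q` is the set of rows of `A` supported only on the
columns of block `q`.  If for every block `q` the reduced Hessian of the block of `Q`
with respect to `A⁻_q` has margin `γ` (i.e. `xᵀQx ≥ γ‖x‖²` for every `x` supported on
block `q` with `(A x) i = 0` for all `i ∈ 𝒜⁻_q`), then the full reduced Hessian has
margin `γ`: `xᵀQx ≥ γ‖x‖²` whenever `A x = 0`. -/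
theorem block_ssosc_implies_ssosc {n m 𝒬 : Type*} [Fintype n] [Fintype m] [Fintype 𝒬]
    (Q : Matrix n n ℝ) (A : Matrix m n ℝ) (g : n → 𝒬) (γ : ℝ)
    (hQsymm : Q.IsSymm) (hγ : 0 < γ)
    (hblkdiag : ∀ a b : n, g a ≠ g b → Q a b = 0)
    (hblock : ∀ q : 𝒬, ∀ x : n → ℝ, (∀ b : n, g b ≠ q → x b = 0) →
      (∀ i : m, (∀ b : n, g b ≠ q → A i b = 0) → (A *ᵥ x) i = 0) →
      γ * vnorm x ^ 2 ≤ x ⬝ᵥ (Q *ᵥ x)) :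
    ∀ x : n → ℝ, A *ᵥ x = 0 → γ * vnorm x ^ 2 ≤ x ⬝ᵥ (Q *ᵥ x) := by
  classical
  intro x hx
  set xq : 𝒬 → n → ℝ := fun q b => if g b = q then x b else 0 with hxq
  have hsq : ∀ v : n → ℝ, vnorm v ^ 2 = ∑ i, v i ^ 2 := by
    intro v
    unfold vnorm
    exact Real.sq_sqrt (Finset.sum_nonneg fun i _ => sq_nonneg _)
  have h1 : ∀ q, γ * vnorm (xq q) ^ 2 ≤ xq q ⬝ᵥ (Q *ᵥ xq q) := by
    intro q
    apply hblock q
    · intro b hb; simp [hxq, hb]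
    · intro i hi
      have : (A *ᵥ xq q) i = (A *ᵥ x) i := by
        simp only [mulVec, dotProduct, hxq]
        refine Finset.sum_congr rfl fun b _ => ?_
        by_cases hb : g b = q
        · simp [hb]
        · simp [hb, hi b hb]
      rw [this, hx]; rfl
  have hnorm : vnorm x ^ 2 = ∑ q, vnorm (xq q) ^ 2 := by
    simp only [hsq]
    rw [Finset.sum_comm]
    refine Finset.sum_congr rfl fun i _ => ?_
    rw [Finset.sum_eq_single (g i)]
    · simp [hxq]
    · intro q _ hq; simp [hxq, Ne.symm hq]
    · intro h; exact absurd (Finset.mem_univ _) h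
  have hquad : ∑ q, xq q ⬝ᵥ (Q *ᵥ xq q) = x ⬝ᵥ (Q *ᵥ x) := by
    simp only [dotProduct, mulVec, Finset.mul_sum]
    rw [Finset.sum_comm]
    refine Finset.sum_congr rfl fun a _ => ?_
    rw [Finset.sum_comm]
    refine Finset.sum_congr rfl fun b _ => ?_
    by_cases hab : g a = g b
    · rw [Finset.sum_eq_single (g a)]
      · simp [hxq, hab]
      · intro q _ hq
        have : g b ≠ q := fun h => hq (hab ▸ h.symm ▸ rfl)
        simp [hxq, this]
      · intro h; exact absurd (Finset.mem_univ _) h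
    · rw [hblkdiag a b hab]
      simp only [mul_zero, zero_mul]
      refine Finset.sum_eq_zero fun q _ => ?_
      by_cases ha : g a = q
      · have : g b ≠ q := fun h => hab (ha.trans h.symm)
        simp [hxq, this]
      · simp [hxq, ha]
  rw [hnorm, ← hquad, Finset.mul_sum]
  exact Finset.sum_le_sum fun q _ => h1 q
end

section
/- Let A ∈ ℝ^{m×n}, let {J_q}_{q=1}^{q̄} partition {1,…,n}, and assume every row of A is nonzero. For each q let 𝒜⁺_q := { i : A[i, J_q] ≠ 0 } and A⁺_q := A[𝒜⁺_q, J_q]. Suppose there exists β > 0 such that A⁺_q (A⁺_q)^⊤ ⪰ β I for every q. Then A A^⊤ ⪰ β I; i.e., block LICQ with uniform margin β implies global LICQ with margin β. -/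
open Matrix

attribute [local instance] Classical.propDecidable

/-- The block `A⁺_q` of `A`: the rows having a nonzero entry in column-block `q`
(the fiber `g⁻¹ q`), restricted to the columns of block `q`. -/
def Aplus {n m 𝒬 : Type*} (A : Matrix m n ℝ) (g : n → 𝒬) (q : 𝒬) :
    Matrix {i : m // ∃ b : n, g b = q ∧ A i b ≠ 0} {b : n // g b = q} ℝ :=
  fun i b => A i.1 b.1

/-- block LICQ implies global LICQ.  Let `{J_q}` be the column
partition given by the fibers of `g` and assume every row of `A` is nonzero.  If
`A⁺_q (A⁺_q)ᵀ ⪰ β I` for every block `q` (with `β > 0`), then `A Aᵀ ⪰ β I`. -/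
theorem block_licq_implies_licq {n m 𝒬 : Type*} [Fintype n] [Fintype m] [Fintype 𝒬]
    (A : Matrix m n ℝ) (g : n → 𝒬) (β : ℝ) (hβ : 0 < β)
    (hrows : ∀ i : m, ∃ b : n, A i b ≠ 0)
    (hblock : ∀ q : 𝒬,
      (Aplus A g q * (Aplus A g q)ᵀ -
        β • (1 : Matrix {i : m // ∃ b : n, g b = q ∧ A i b ≠ 0}
          {i : m // ∃ b : n, g b = q ∧ A i b ≠ 0} ℝ)).PosSemidef) :
    ((A * Aᵀ) - β • (1 : Matrix m m ℝ)).PosSemidef := by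
  classical
  rw [posSemidef_iff_dotProduct_mulVec]
  constructor
  · have h1 : (A * Aᵀ).IsHermitian := by
      have := isHermitian_mul_conjTranspose_self A
      simpa [conjTranspose_eq_transpose_of_trivial] using this
    have h2 : (β • (1 : Matrix m m ℝ)).IsHermitian := by
      simp [Matrix.IsHermitian]
    exact h1.sub h2
  intro x
  have hstar : star x = x := by simp
  rw [hstar]
  -- v is Aᵀ x
  set v : n → ℝ := Aᵀ *ᵥ x with hv
  have hquad : x ⬝ᵥ ((A * Aᵀ) *ᵥ x) = ∑ b, v b ^ 2 := by
    rw [← mulVec_mulVec, dotProduct_mulVec, ← mulVec_transpose]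
    simp [hv, dotProduct, sq]
  have hgoal : x ⬝ᵥ (((A * Aᵀ) - β • 1) *ᵥ x)
      = (∑ b, v b ^ 2) - β * ∑ i, x i ^ 2 := by
    rw [sub_mulVec, dotProduct_sub, hquad, smul_mulVec, one_mulVec,
      dotProduct_smul]
    simp [dotProduct, sq, smul_eq_mul]
  rw [hgoal, sub_nonneg]
  -- block inequality
  have hblock' : ∀ q : 𝒬,
      β * (∑ i : {i : m // ∃ b : n, g b = q ∧ A i b ≠ 0}, x i.1 ^ 2)
        ≤ ∑ b : {b : n // g b = q}, v b.1 ^ 2 := by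
    intro q
    set y : {i : m // ∃ b : n, g b = q ∧ A i b ≠ 0} → ℝ := fun i => x i.1 with hy
    have h := (hblock q).dotProduct_mulVec_nonneg y
    have hstar' : star y = y := by simp
    rw [hstar'] at h
    have hw : ∀ b : {b : n // g b = q}, ((Aplus A g q)ᵀ *ᵥ y) b = v b.1 := by
      intro b
      have : ((Aplus A g q)ᵀ *ᵥ y) b
          = ∑ i : {i : m // ∃ b : n, g b = q ∧ A i b ≠ 0}, A i.1 b.1 * x i.1 := by
        simp [hy, Aplus, mulVec, dotProduct, transpose]
      rw [this, hv]
      have hsub : ∑ i : {i : m // ∃ b : n, g b = q ∧ A i b ≠ 0}, A i.1 b.1 * x i.1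
          = ∑ i ∈ Finset.univ.filter (fun i => ∃ b : n, g b = q ∧ A i b ≠ 0),
              A i b.1 * x i := by
        rw [Finset.sum_filter]
        rw [← Finset.sum_subtype (p := fun i => ∃ b : n, g b = q ∧ A i b ≠ 0)
          (Finset.univ.filter (fun i => ∃ b : n, g b = q ∧ A i b ≠ 0))
          (by simp) (fun i => A i b.1 * x i)]
        rw [Finset.sum_filter]
      rw [hsub]
      rw [Finset.sum_filter]
      have : (Aᵀ *ᵥ x) b.1 = ∑ i, A i b.1 * x i := by
        simp [mulVec, dotProduct, transpose]
      rw [this]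
      apply Finset.sum_congr rfl
      intro i _
      by_cases hi : ∃ b' : n, g b' = q ∧ A i b' ≠ 0
      · simp [hi]
      · have : A i b.1 = 0 := by
          by_contra hA
          exact hi ⟨b.1, b.2, hA⟩
        simp [hi, this]
    have hquad' : y ⬝ᵥ ((Aplus A g q * (Aplus A g q)ᵀ) *ᵥ y)
        = ∑ b : {b : n // g b = q}, v b.1 ^ 2 := by
      rw [← mulVec_mulVec, dotProduct_mulVec, ← mulVec_transpose]
      simp only [dotProduct]
      refine Finset.sum_congr rfl fun b _ => ?_
      rw [hw b, sq]
    have hexp : y ⬝ᵥ (((Aplus A g q * (Aplus A g q)ᵀ) - β • 1) *ᵥ y)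
        = (∑ b : {b : n // g b = q}, v b.1 ^ 2)
          - β * ∑ i : {i : m // ∃ b : n, g b = q ∧ A i b ≠ 0}, x i.1 ^ 2 := by
      rw [sub_mulVec, dotProduct_sub, hquad', smul_mulVec, one_mulVec,
        dotProduct_smul]
      simp [hy, dotProduct, sq, smul_eq_mul]
    rw [hexp] at h
    linarith
  -- sum over blocks
  have hRHS : ∑ q : 𝒬, ∑ b : {b : n // g b = q}, v b.1 ^ 2 = ∑ b, v b ^ 2 := by
    rw [← Finset.sum_fiberwise Finset.univ g (fun b => v b ^ 2)]
    refine Finset.sum_congr rfl fun q _ => ?_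
    rw [← Finset.sum_subtype (p := fun b => g b = q)
      (Finset.univ.filter (fun b => g b = q)) (by simp) (fun b => v b ^ 2)]
  have hLHS : β * ∑ i, x i ^ 2
      ≤ ∑ q : 𝒬, β * (∑ i : {i : m // ∃ b : n, g b = q ∧ A i b ≠ 0}, x i.1 ^ 2) := by
    choose bfun hbfun using hrows
    have hcover : ∑ i, x i ^ 2
        ≤ ∑ q : 𝒬, ∑ i : {i : m // ∃ b : n, g b = q ∧ A i b ≠ 0}, x i.1 ^ 2 := by
      have h1 : ∑ i, x i ^ 2
          = ∑ q : 𝒬, ∑ i ∈ Finset.univ.filter (fun i => g (bfun i) = q), x i ^ 2 := by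
        rw [Finset.sum_fiberwise Finset.univ (fun i => g (bfun i)) (fun i => x i ^ 2)]
      rw [h1]
      refine Finset.sum_le_sum fun q _ => ?_
      rw [← Finset.sum_subtype (p := fun i => ∃ b : n, g b = q ∧ A i b ≠ 0)
        (Finset.univ.filter (fun i => ∃ b : n, g b = q ∧ A i b ≠ 0))
        (by simp) (fun i => x i ^ 2)]
      refine Finset.sum_le_sum_of_subset_of_nonneg ?_ (fun i _ _ => sq_nonneg _)
      intro i hi
      simp only [Finset.mem_filter, Finset.mem_univ, true_and] at hi ⊢
      exact ⟨bfun i, hi, hbfun i⟩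
    calc β * ∑ i, x i ^ 2
        ≤ β * ∑ q : 𝒬, ∑ i : {i : m // ∃ b : n, g b = q ∧ A i b ≠ 0}, x i.1 ^ 2 :=
          by exact mul_le_mul_of_nonneg_left hcover hβ.le
      _ = _ := by rw [Finset.mul_sum]
  calc β * ∑ i, x i ^ 2
      ≤ ∑ q : 𝒬, β * (∑ i : {i : m // ∃ b : n, g b = q ∧ A i b ≠ 0}, x i.1 ^ 2) := hLHS
    _ ≤ ∑ q : 𝒬, ∑ b : {b : n // g b = q}, v b.1 ^ 2 :=
        Finset.sum_le_sum fun q _ => hblock' q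
    _ = ∑ b, v b ^ 2 := hRHS
end
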